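/- Let T be a tree rooted at v and T̄ its pruning. For every maximum dissociation set F̄ of T̄ there exists a maximum dissociation set F of T with v ∈ F if and only if v ∈ F̄; conversely, for every maximum dissociation set F of T there exists a maximum dissociation set F̄ of T̄ with v ∈ F̄ if and only if v ∈ F. -/

import Mathlib

open scoped Classical

/-- `F` is a dissociation set of `G`: the induced subgraph `G[F]` has maximum degree ≤ 1. -/
def IsDissocSet {V : Type*} (G : SimpleGraph V) (F : Set V) : Prop :=
  ∀ u ∈ F, ∀ w ∈ F, ∀ w' ∈ F, G.Adj u w → G.Adj u w' → w = w'

/-- `F` is a maximum dissociation set of `G`. -/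
def IsMaxDissocSet {V : Type*} (G : SimpleGraph V) (F : Set V) : Prop :=
  IsDissocSet G F ∧ ∀ F' : Set V, IsDissocSet G F' → F'.ncard ≤ F.ncard

/-- The dissociation number ψ(G). -/
noncomputable def dissNum {V : Type*} (G : SimpleGraph V) : ℕ :=
  sSup {n | ∃ F : Set V, IsDissocSet G F ∧ F.ncard = n}

/-- `F` is a maximum dissociation set of the induced subgraph `G[S]`. -/
def IsMaxDissocOn {V : Type*} (G : SimpleGraph V) (S F : Set V) : Prop :=
  F ⊆ S ∧ IsDissocSet G F ∧
    ∀ F' : Set V, F' ⊆ S → IsDissocSet G F' → F'.ncard ≤ F.ncard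

/-- The dissociation number of the induced subgraph `G[S]`. -/
noncomputable def dissNumOn {V : Type*} (G : SimpleGraph V) (S : Set V) : ℕ :=
  sSup {n | ∃ F : Set V, F ⊆ S ∧ IsDissocSet G F ∧ F.ncard = n}

/-- In the tree `G` rooted at `v`, restricted to the vertex set `S` (an ancestor-closed subset,
so distances agree with those of `G`): `u` together with all its descendants inside `S`. -/
def descIn {V : Type*} (G : SimpleGraph V) (v : V) (S : Set V) (u : V) : Set V :=
  {x ∈ S | G.dist v x = G.dist v u + G.dist u x}

/-- `w` is a child of `u` in the subtree of `G` (rooted at `v`) induced by `S`. -/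
def childIn {V : Type*} (G : SimpleGraph V) (v : V) (S : Set V) (u w : V) : Prop :=
  w ∈ S ∧ G.Adj u w ∧ G.dist v w = G.dist v u + 1

/-- `u` is a branch vertex (degree ≥ 3) of the subgraph of `G` induced by `S`. -/
def branchIn {V : Type*} (G : SimpleGraph V) (S : Set V) (u : V) : Prop :=
  3 ≤ (G.neighborSet u ∩ S).ncard

/-- `C^i(u)` inside `S`: children `w` of `u` whose subtree has order ≡ i (mod 3). -/
def cIn {V : Type*} (G : SimpleGraph V) (v : V) (S : Set V) (u : V) (i : ℕ) : Set V :=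
  {w | childIn G v S u w ∧ (descIn G v S w).ncard % 3 = i}

/-- One step of the pruning process at a deepest branch vertex `u ≠ v`. -/
def PruneStep {V : Type*} (G : SimpleGraph V) (v : V) (S S' : Set V) : Prop :=
  ∃ u ∈ S, u ≠ v ∧ branchIn G S u ∧
    (∀ x ∈ S, x ≠ v → branchIn G S x → G.dist v x ≤ G.dist v u) ∧
    ((1 ≤ (cIn G v S u 2).ncard ∨ 2 ≤ (cIn G v S u 1).ncard) ∧
        S' = S \ descIn G v S u ∨
     ((cIn G v S u 2).ncard = 0 ∧ (cIn G v S u 1).ncard ≤ 1) ∧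
        ∃ z, childIn G v S u z ∧
          ((cIn G v S u 1).ncard = 1 → (descIn G v S z).ncard % 3 = 1) ∧
          S' = S \ ⋃ w ∈ {w | childIn G v S u w ∧ w ≠ z}, descIn G v S w)

/-- `S` is (the vertex set of) the pruning `T̄` of the tree `G` rooted at `v`: it is obtained
from the whole vertex set by repeated pruning steps, and has no branch vertex other than `v`. -/
def IsPruning {V : Type*} (G : SimpleGraph V) (v : V) (S : Set V) : Prop :=
  Relation.ReflTransGen (PruneStep G v) Set.univ S ∧
    ∀ u ∈ S, u ≠ v → ¬ branchIn G S u

section Toolkit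
variable {V : Type*} {G : SimpleGraph V}

lemma tree_adj_dist_ne (hG : G.IsTree) (x : V) {a b : V} (h : G.Adj a b) :
    G.dist x a ≠ G.dist x b := by
  intro heq
  obtain ⟨p, hp, hpl⟩ := hG.isConnected.exists_path_of_dist x a
  obtain ⟨q, hq, hql⟩ := hG.isConnected.exists_path_of_dist x b
  have hbp : b ∉ p.support := by
    intro hb
    have h1 : (p.takeUntil b hb).length + (p.dropUntil b hb).length = p.length := by
      rw [← SimpleGraph.Walk.length_append, SimpleGraph.Walk.take_spec]
    have h2 : G.dist x b ≤ (p.takeUntil b hb).length := SimpleGraph.dist_le _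
    have h3 : G.dist b a ≤ (p.dropUntil b hb).length := SimpleGraph.dist_le _
    have h4 : G.dist b a = 1 := SimpleGraph.dist_eq_one_iff_adj.2 h.symm
    omega
  have hp' : (p.concat h).IsPath := by
    rw [← SimpleGraph.Walk.isPath_reverse_iff, SimpleGraph.Walk.reverse_concat]
    rw [SimpleGraph.Walk.cons_isPath_iff]
    refine ⟨(SimpleGraph.Walk.isPath_reverse_iff p).2 hp, ?_⟩
    rw [SimpleGraph.Walk.support_reverse]
    simpa using hbp
  have := hG.IsAcyclic.path_unique ⟨p.concat h, hp'⟩ ⟨q, hq⟩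
  have hlen : (p.concat h).length = q.length := by rw [congrArg SimpleGraph.Walk.length (congrArg Subtype.val this)]
  rw [SimpleGraph.Walk.length_concat] at hlen
  omega

lemma tree_adj_dist (hG : G.IsTree) (x : V) {a b : V} (h : G.Adj a b) :
    G.dist x b = G.dist x a + 1 ∨ G.dist x a = G.dist x b + 1 := by
  have h1 : G.dist x b ≤ G.dist x a + G.dist a b := hG.isConnected.dist_triangle
  have h2 : G.dist x a ≤ G.dist x b + G.dist b a := hG.isConnected.dist_triangle
  have h3 : G.dist a b = 1 := SimpleGraph.dist_eq_one_iff_adj.2 h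
  have h4 : G.dist b a = 1 := SimpleGraph.dist_eq_one_iff_adj.2 h.symm
  have h5 := tree_adj_dist_ne hG x h
  omega

lemma tree_second_vertex (hG : G.IsTree) {a b : V} (hne : a ≠ b) :
    ∃ c, G.Adj a c ∧ G.dist c b + 1 = G.dist a b := by
  obtain ⟨p, hpl⟩ := (hG.isConnected a b).exists_walk_length_eq_dist
  cases p with
  | nil => exact absurd rfl hne
  | cons h q =>
    rename_i c
    refine ⟨c, h, ?_⟩
    have h1 : G.dist c b ≤ q.length := SimpleGraph.dist_le _
    have h2 : G.dist a b ≤ G.dist a c + G.dist c b := hG.isConnected.dist_triangle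
    have h3 : G.dist a c ≤ 1 := by
      have := SimpleGraph.dist_eq_one_iff_adj.2 h; omega
    simp only [SimpleGraph.Walk.length_cons] at hpl
    omega

lemma tree_unique_second (hG : G.IsTree) {a b c c' : V} (h : G.Adj a c) (h' : G.Adj a c')
    (hc : G.dist c b + 1 = G.dist a b) (hc' : G.dist c' b + 1 = G.dist a b) : c = c' := by
  obtain ⟨p, hp, hpl⟩ := hG.isConnected.exists_path_of_dist c b
  obtain ⟨q, hq, hql⟩ := hG.isConnected.exists_path_of_dist c' b
  have hp1 : (SimpleGraph.Walk.cons h p).IsPath := by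
    apply SimpleGraph.Walk.isPath_of_length_eq_dist
    simp [SimpleGraph.Walk.length_cons, hpl, hc]
  have hq1 : (SimpleGraph.Walk.cons h' q).IsPath := by
    apply SimpleGraph.Walk.isPath_of_length_eq_dist
    simp [SimpleGraph.Walk.length_cons, hql, hc']
  have := hG.IsAcyclic.path_unique ⟨SimpleGraph.Walk.cons h p, hp1⟩ ⟨SimpleGraph.Walk.cons h' q, hq1⟩
  have hs := congrArg SimpleGraph.Walk.support (congrArg Subtype.val this)
  rw [SimpleGraph.Walk.support_cons, SimpleGraph.Walk.support_cons,
    SimpleGraph.Walk.support_eq_cons p, SimpleGraph.Walk.support_eq_cons q] at hs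
  exact (List.cons.injEq _ _ _ _ ▸ hs).2 |> fun h2 => (List.cons.injEq _ _ _ _ ▸ h2).1

lemma tree_nonadj (hG : G.IsTree) (x : V) {a b : V}
    (h1 : G.dist x b ≠ G.dist x a + 1) (h2 : G.dist x a ≠ G.dist x b + 1) : ¬ G.Adj a b :=
  fun h => by rcases tree_adj_dist hG x h with h' | h' <;> omega

end Toolkit

/-- ancestor-closed subset -/
def AncClosed {V : Type*} (G : SimpleGraph V) (v : V) (S : Set V) : Prop :=
  ∀ x ∈ S, ∀ y : V, G.dist v x = G.dist v y + G.dist y x → y ∈ S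

section Desc
variable {V : Type*} {G : SimpleGraph V} {v : V} {S : Set V}

lemma mem_descIn_self {u : V} (hu : u ∈ S) : u ∈ descIn G v S u :=
  ⟨hu, by simp [SimpleGraph.dist_self]⟩

lemma descIn_subset {u : V} : descIn G v S u ⊆ S := fun _ hx => hx.1

lemma v_not_mem_descIn (hG : G.IsTree) {u : V} (hu : u ≠ v) : v ∉ descIn G v S u := by
  rintro ⟨-, hd⟩
  rw [SimpleGraph.dist_self] at hd
  exact hu (hG.isConnected.dist_eq_zero_iff.1 (by omega)).symm

lemma descIn_trans (hG : G.IsTree) {u y x : V} (hy : y ∈ descIn G v S u) (hxS : x ∈ S)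
    (hxy : G.dist v x = G.dist v y + G.dist y x) : x ∈ descIn G v S u := by
  obtain ⟨hyS, hyd⟩ := hy
  have t1 : G.dist u x ≤ G.dist u y + G.dist y x := hG.isConnected.dist_triangle
  have t2 : G.dist v x ≤ G.dist v u + G.dist u x := hG.isConnected.dist_triangle
  exact ⟨hxS, by omega⟩

lemma descIn_child_subset (hG : G.IsTree) {u c : V} (hc : childIn G v S u c) :
    descIn G v S c ⊆ descIn G v S u := by
  rintro x ⟨hxS, hxd⟩
  have h1 : G.dist u c = 1 := SimpleGraph.dist_eq_one_iff_adj.2 hc.2.1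
  have t1 : G.dist u x ≤ G.dist u c + G.dist c x := hG.isConnected.dist_triangle
  have t2 : G.dist v x ≤ G.dist v u + G.dist u x := hG.isConnected.dist_triangle
  have h2 := hc.2.2
  exact ⟨hxS, by omega⟩

lemma not_mem_descIn_child (hG : G.IsTree) {u c x : V} (hc : childIn G v S u c)
    (hx : G.dist v x ≤ G.dist v u) : x ∉ descIn G v S c := by
  rintro ⟨-, hd⟩
  have h2 := hc.2.2
  omega

lemma child_of_desc (hG : G.IsTree) (hanc : AncClosed G v S) {u x : V}
    (hx : x ∈ descIn G v S u) (hne : x ≠ u) :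
    ∃ c, childIn G v S u c ∧ x ∈ descIn G v S c := by
  obtain ⟨hxS, hxd⟩ := hx
  obtain ⟨c, hadj, hcd⟩ := tree_second_vertex hG (Ne.symm hne)
  have h1 : G.dist u c = 1 := SimpleGraph.dist_eq_one_iff_adj.2 hadj
  have t1 : G.dist v c ≤ G.dist v u + G.dist u c := hG.isConnected.dist_triangle
  have t2 : G.dist v x ≤ G.dist v c + G.dist c x := hG.isConnected.dist_triangle
  have hvc : G.dist v c = G.dist v u + 1 := by omega
  have hxc : G.dist v x = G.dist v c + G.dist c x := by omega
  have hcS : c ∈ S := hanc x hxS c hxc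
  exact ⟨c, ⟨hcS, hadj, hvc⟩, ⟨hxS, hxc⟩⟩

lemma child_unique_of_desc (hG : G.IsTree) {u c c' x : V} (hc : childIn G v S u c)
    (hc' : childIn G v S u c') (hx : x ∈ descIn G v S c) (hx' : x ∈ descIn G v S c') :
    c = c' := by
  have hxu : x ∈ descIn G v S u := descIn_child_subset hG hc hx
  have h1 : G.dist c x + 1 = G.dist u x := by
    have := hx.2; have := hxu.2; have := hc.2.2; omega
  have h2 : G.dist c' x + 1 = G.dist u x := by
    have := hx'.2; have := hxu.2; have := hc'.2.2; omega
  exact tree_unique_second hG hc.2.1 hc'.2.1 h1 h2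

lemma parent_exists (hG : G.IsTree) (hanc : AncClosed G v S) {x : V} (hx : x ∈ S)
    (hne : x ≠ v) : ∃ p, p ∈ S ∧ G.Adj x p ∧ G.dist v p + 1 = G.dist v x := by
  obtain ⟨p, hadj, hpd⟩ := tree_second_vertex hG hne
  have h1 : G.dist v p + 1 = G.dist v x := by
    have e1 : G.dist v p = G.dist p v := SimpleGraph.dist_comm
    have e2 : G.dist v x = G.dist x v := SimpleGraph.dist_comm
    omega
  have hpx : G.dist p x = 1 := SimpleGraph.dist_eq_one_iff_adj.2 hadj.symm
  exact ⟨p, hanc x hx p (by omega), hadj, h1⟩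

lemma branch_of_two_children [Fintype V] (hG : G.IsTree) (hanc : AncClosed G v S) {x c c' : V}
    (hx : x ∈ S) (hne : x ≠ v) (hc : childIn G v S x c) (hc' : childIn G v S x c')
    (hcc : c ≠ c') : branchIn G S x := by
  obtain ⟨p, hpS, hpadj, hpd⟩ := parent_exists hG hanc hx hne
  have hsub : ({p, c, c'} : Set V) ⊆ G.neighborSet x ∩ S := by
    rintro y (rfl | rfl | rfl)
    · exact ⟨hpadj, hpS⟩
    · exact ⟨hc.2.1, hc.1⟩
    · exact ⟨hc'.2.1, hc'.1⟩
  have hpc : p ≠ c := fun h => by subst h; have := hc.2.2; omega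
  have hpc' : p ≠ c' := fun h => by subst h; have := hc'.2.2; omega
  have h3 : ({p, c, c'} : Set V).ncard = 3 := by
    rw [Set.ncard_insert_of_notMem (by simp [hpc, hpc']) (Set.toFinite _),
      Set.ncard_insert_of_notMem (by simp [hcc]) (Set.toFinite _), Set.ncard_singleton]
  calc 3 = ({p, c, c'} : Set V).ncard := h3.symm
    _ ≤ _ := Set.ncard_le_ncard hsub (Set.toFinite _)

lemma desc_boundary (hG : G.IsTree) {u x y : V} (hx : x ∈ descIn G v S u) (hyS : y ∈ S)
    (hy : y ∉ descIn G v S u) (hadj : G.Adj x y) : x = u := by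
  obtain ⟨hxS, hxd⟩ := hx
  rcases tree_adj_dist hG v hadj with hcase | hcase
  · -- dist v y = dist v x + 1 : y would be a descendant
    exfalso
    have t1 : G.dist u y ≤ G.dist u x + 1 := by
      have t := hG.isConnected.dist_triangle (u := u) (v := x) (w := y)
      have := SimpleGraph.dist_eq_one_iff_adj.2 hadj; omega
    have t2 : G.dist v y ≤ G.dist v u + G.dist u y := hG.isConnected.dist_triangle
    exact hy ⟨hyS, by omega⟩
  · -- dist v x = dist v y + 1
    by_contra hne
    obtain ⟨c, hcadj, hcd⟩ := tree_second_vertex hG (a := x) (b := u) (fun h => hne h)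
    have hduc : G.dist u c + 1 = G.dist u x := by
      have e1 : G.dist u c = G.dist c u := SimpleGraph.dist_comm
      have e2 : G.dist u x = G.dist x u := SimpleGraph.dist_comm
      omega
    have hdux : 1 ≤ G.dist u x := by
      rcases Nat.eq_zero_or_pos (G.dist u x) with h | h
      · exact absurd (hG.isConnected.dist_eq_zero_iff.1 h).symm hne
      · omega
    have hvc : G.dist v c + 1 = G.dist v x := by
      have t1 : G.dist v c ≤ G.dist v u + G.dist u c := hG.isConnected.dist_triangle
      rcases tree_adj_dist hG v hcadj with h | h <;> omega
    have hyc : y = c := by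
      have e1 : G.dist y v = G.dist v y := SimpleGraph.dist_comm
      have e2 : G.dist c v = G.dist v c := SimpleGraph.dist_comm
      have e3 : G.dist x v = G.dist v x := SimpleGraph.dist_comm
      exact tree_unique_second hG (b := v) hadj hcadj (by omega) (by omega)
    subst hyc
    exact hy ⟨hyS, by omega⟩

end Desc

section Dissoc
variable {V : Type*} [Fintype V] {G : SimpleGraph V}

lemma dissoc_subset {F A : Set V} (hF : IsDissocSet G F) (h : A ⊆ F) : IsDissocSet G A :=
  fun u hu w hw w' hw' h1 h2 => hF u (h hu) w (h hw) w' (h hw') h1 h2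

lemma dissoc_empty : IsDissocSet G (∅ : Set V) := fun u hu => absurd hu (by simp)

lemma dissoc_pair {a b : V} : IsDissocSet G {a, b} := by
  intro u hu w hw w' hw' h1 h2
  have hwu : w ≠ u := fun h => G.irrefl (h ▸ h1)
  have hw'u : w' ≠ u := fun h => G.irrefl (h ▸ h2)
  simp only [Set.mem_insert_iff, Set.mem_singleton_iff] at hu hw hw'
  rcases hu with rfl | rfl <;> rcases hw with rfl | rfl <;> rcases hw' with rfl | rfl <;> simp_all

lemma dissoc_singleton {a : V} : IsDissocSet G {a} := by
  have : ({a} : Set V) = {a, a} := by simp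
  rw [this]; exact dissoc_pair

lemma dissoc_union {A B : Set V} (hA : IsDissocSet G A) (hB : IsDissocSet G B)
    (hcross : ∀ a ∈ A, ∀ b ∈ B, ¬ G.Adj a b) : IsDissocSet G (A ∪ B) := by
  rintro u (hu | hu) w hw w' hw' h1 h2
  · have hwA : w ∈ A := hw.resolve_right fun hB' => hcross u hu w hB' h1
    have hw'A : w' ∈ A := hw'.resolve_right fun hB' => hcross u hu w' hB' h2
    exact hA u hu w hwA w' hw'A h1 h2
  · have hwB : w ∈ B := hw.resolve_left fun hA' => hcross w hA' u hu h1.symm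
    have hw'B : w' ∈ B := hw'.resolve_left fun hA' => hcross w' hA' u hu h2.symm
    exact hB u hu w hwB w' hw'B h1 h2

lemma exists_maxOn (G : SimpleGraph V) (S : Set V) : ∃ M, IsMaxDissocOn G S M := by
  have hC : ({F | F ⊆ S ∧ IsDissocSet G F} : Set (Set V)).Finite := Set.toFinite _
  obtain ⟨M, hMC, hmax⟩ := Set.Finite.exists_maximalFor Set.ncard _ hC
    ⟨∅, by simp, dissoc_empty⟩
  refine ⟨M, hMC.1, hMC.2, fun F' hF'S hF' => ?_⟩
  by_contra hlt
  push_neg at hlt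
  exact absurd (hmax (show F' ∈ {F | F ⊆ S ∧ IsDissocSet G F} from ⟨hF'S, hF'⟩) (le_of_lt hlt)) (by omega)

lemma ncard_split {F A B : Set V} (hF : F ⊆ A ∪ B) (h : Disjoint A B) :
    F.ncard = (F ∩ A).ncard + (F ∩ B).ncard := by
  rw [← Set.ncard_union_eq (h.mono Set.inter_subset_right Set.inter_subset_right)
    (Set.toFinite _) (Set.toFinite _)]
  congr 1
  rw [← Set.inter_union_distrib_left]
  exact (Set.inter_eq_left.2 hF).symm

lemma ncard_biUnion (s : Finset V) (f : V → Set V)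
    (h : ∀ c ∈ s, ∀ c' ∈ s, c ≠ c' → Disjoint (f c) (f c')) :
    (⋃ c ∈ s, f c).ncard = ∑ c ∈ s, (f c).ncard := by
  induction s using Finset.induction_on with
  | empty => simp
  | insert _ _ hnotmem ih =>
    rename_i a s
    rw [Finset.set_biUnion_insert, Finset.sum_insert hnotmem,
      Set.ncard_union_eq ?_ (Set.toFinite _) (Set.toFinite _),
      ih fun c hc c' hc' => h c (Finset.mem_insert_of_mem hc) c' (Finset.mem_insert_of_mem hc')]
    · rw [Set.disjoint_iUnion_right]
      intro c
      rw [Set.disjoint_iUnion_right]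
      intro hc
      exact h a (Finset.mem_insert_self a s) c (Finset.mem_insert_of_mem hc)
        (fun hh => hnotmem (hh ▸ hc))

lemma ncard_eq_sum_of_subset {F : Set V} (s : Finset V) (f : V → Set V)
    (hF : F ⊆ ⋃ c ∈ s, f c)
    (h : ∀ c ∈ s, ∀ c' ∈ s, c ≠ c' → Disjoint (f c) (f c')) :
    F.ncard = ∑ c ∈ s, (F ∩ f c).ncard := by
  have hFe : F = ⋃ c ∈ s, (F ∩ f c) := by
    ext x
    simp only [Set.mem_iUnion, Set.mem_inter_iff, exists_and_left]
    constructor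
    · intro hx
      obtain ⟨c, hc⟩ := Set.mem_iUnion.1 (hF hx)
      obtain ⟨hcs, hcf⟩ := Set.mem_iUnion.1 hc
      exact ⟨hx, c, hcs, hcf⟩
    · rintro ⟨hx, -⟩; exact hx
  rw [hFe, ncard_biUnion s _ fun c hc c' hc' hne =>
    ((h c hc c' hc' hne).mono Set.inter_subset_right Set.inter_subset_right)]
  exact Finset.sum_congr rfl fun c hc => by
    congr 1
    rw [← hFe]

lemma dissoc_biUnion (s : Finset V) (f : V → Set V)
    (hdis : ∀ c ∈ s, IsDissocSet G (f c))
    (hcross : ∀ c ∈ s, ∀ c' ∈ s, c ≠ c' → ∀ a ∈ f c, ∀ b ∈ f c', ¬ G.Adj a b) :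
    IsDissocSet G (⋃ c ∈ s, f c) := by
  induction s using Finset.induction_on with
  | empty => simpa using dissoc_empty
  | insert _ _ hnotmem ih =>
    rename_i a s
    rw [Finset.set_biUnion_insert]
    refine dissoc_union (hdis a (Finset.mem_insert_self a s))
      (ih (fun c hc => hdis c (Finset.mem_insert_of_mem hc))
        (fun c hc c' hc' hne => hcross c (Finset.mem_insert_of_mem hc) c'
          (Finset.mem_insert_of_mem hc') hne)) ?_
    intro x hx b hb
    obtain ⟨c, hcmem⟩ := Set.mem_iUnion.1 hb
    obtain ⟨hcs, hcf⟩ := Set.mem_iUnion.1 hcmem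
    exact hcross a (Finset.mem_insert_self a s) c (Finset.mem_insert_of_mem hcs)
      (fun hh => hnotmem (hh ▸ hcs)) x hx b hcf

lemma step_corr {v : V} {S D : Set V} (hDS : D ⊆ S) (hvS : v ∈ S) (hvD : v ∉ D)
    {M : Set V} (hM : IsMaxDissocOn G D M)
    (hcross : ∀ x ∈ M, ∀ y ∈ S \ D, ¬ G.Adj x y) :
    (∀ F', IsMaxDissocOn G (S \ D) F' → ∃ F, IsMaxDissocOn G S F ∧ (v ∈ F ↔ v ∈ F')) ∧
    (∀ F, IsMaxDissocOn G S F → ∃ F', IsMaxDissocOn G (S \ D) F' ∧ (v ∈ F' ↔ v ∈ F)) := by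
  obtain ⟨hMD, hMdis, hMmax⟩ := hM
  have hSsplit : S ⊆ (S \ D) ∪ D := by rw [Set.diff_union_of_subset hDS]
  have hdisj : Disjoint (S \ D) D := Set.disjoint_sdiff_left
  constructor
  · rintro F' ⟨hF'S, hF'dis, hF'max⟩
    have hFM : Disjoint F' M := hdisj.mono hF'S hMD
    have hdis : IsDissocSet G (F' ∪ M) :=
      dissoc_union hF'dis hMdis fun a ha b hb hadj => hcross b hb a (hF'S ha) hadj.symm
    refine ⟨F' ∪ M, ⟨Set.union_subset (hF'S.trans Set.diff_subset) (hMD.trans hDS), hdis, ?_⟩, ?_⟩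
    · intro F'' hF''S hF''dis
      have h1 : F''.ncard = (F'' ∩ (S \ D)).ncard + (F'' ∩ D).ncard :=
        ncard_split (hF''S.trans hSsplit) hdisj
      have h2 : (F'' ∩ (S \ D)).ncard ≤ F'.ncard :=
        hF'max _ Set.inter_subset_right (dissoc_subset hF''dis Set.inter_subset_left)
      have h3 : (F'' ∩ D).ncard ≤ M.ncard :=
        hMmax _ Set.inter_subset_right (dissoc_subset hF''dis Set.inter_subset_left)
      have h4 : (F' ∪ M).ncard = F'.ncard + M.ncard :=
        Set.ncard_union_eq hFM (Set.toFinite _) (Set.toFinite _)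
      omega
    · have : v ∉ M := fun h => hvD (hMD h)
      simp [this]
  · rintro F ⟨hFS, hFdis, hFmax⟩
    refine ⟨F ∩ (S \ D), ⟨Set.inter_subset_right, dissoc_subset hFdis Set.inter_subset_left, ?_⟩, ?_⟩
    · intro F'' hF''S hF''dis
      have hFM2 : Disjoint F'' M := hdisj.mono hF''S hMD
      have hdis2 : IsDissocSet G (F'' ∪ M) :=
        dissoc_union hF''dis hMdis fun a ha b hb hadj => hcross b hb a (hF''S ha) hadj.symm
      have h0 : (F'' ∪ M).ncard ≤ F.ncard :=
        hFmax _ (Set.union_subset (hF''S.trans Set.diff_subset) (hMD.trans hDS)) hdis2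
      have h1 : F.ncard = (F ∩ (S \ D)).ncard + (F ∩ D).ncard := ncard_split (hFS.trans hSsplit) hdisj
      have h3 : (F ∩ D).ncard ≤ M.ncard :=
        hMmax _ Set.inter_subset_right (dissoc_subset hFdis Set.inter_subset_left)
      have h4 : (F'' ∪ M).ncard = F''.ncard + M.ncard :=
        Set.ncard_union_eq hFM2 (Set.toFinite _) (Set.toFinite _)
      omega
    · constructor
      · rintro ⟨h, -⟩; exact h
      · intro h; exact ⟨h, hvS, hvD⟩

end Dissoc

/-- every vertex of the subtree below `w` has at most one child -/
def Pendant {V : Type*} (G : SimpleGraph V) (v : V) (S : Set V) (w : V) : Prop :=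
  ∀ x ∈ descIn G v S w, ∀ c c', childIn G v S x c → childIn G v S x c' → c = c'

def psi3 (n : ℕ) : ℕ := n - n / 3

section Pend
variable {V : Type*} [Fintype V] {G : SimpleGraph V} {v : V} {S : Set V}

lemma mem_desc_dist {w x : V} (hx : x ∈ descIn G v S w) : G.dist v w ≤ G.dist v x := by
  have := hx.2; omega

lemma desc_singleton (hw : w ∈ S) (h1 : (descIn G v S w).ncard = 1) :
    descIn G v S w = {w} := by
  obtain ⟨x, hx⟩ := Set.ncard_eq_one.1 h1
  have := mem_descIn_self (G := G) (v := v) hw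
  rw [hx] at this ⊢
  rw [Set.mem_singleton_iff.1 this]

lemma pendant_child (hG : G.IsTree) {w w1 : V} (hc : childIn G v S w w1)
    (hpend : Pendant G v S w) : Pendant G v S w1 :=
  fun x hx => hpend x (descIn_child_subset hG hc hx)

lemma peel (hG : G.IsTree) (hanc : AncClosed G v S) {w : V} (hw : w ∈ S)
    (hpend : Pendant G v S w) (h2 : 2 ≤ (descIn G v S w).ncard) :
    ∃ w1, childIn G v S w w1 ∧ descIn G v S w = insert w (descIn G v S w1) ∧
      w ∉ descIn G v S w1 ∧ (descIn G v S w1).ncard + 1 = (descIn G v S w).ncard ∧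
      Pendant G v S w1 := by
  obtain ⟨x, hxQ, hxw⟩ := Set.exists_ne_of_one_lt_ncard (s := descIn G v S w) (by omega) w
  obtain ⟨w1, hc1, hxc⟩ := child_of_desc hG hanc hxQ hxw
  have hQe : descIn G v S w = insert w (descIn G v S w1) := by
    ext y
    constructor
    · intro hy
      by_cases hyw : y = w
      · exact hyw ▸ Set.mem_insert _ _
      · obtain ⟨c, hc, hyc⟩ := child_of_desc hG hanc hy hyw
        rw [hpend w (mem_descIn_self hw) c w1 hc hc1] at hyc
        exact Set.mem_insert_of_mem _ hyc
    · rintro (rfl | hy)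
      · exact mem_descIn_self hw
      · exact descIn_child_subset hG hc1 hy
  have hwn : w ∉ descIn G v S w1 := not_mem_descIn_child hG hc1 (le_refl _)
  refine ⟨w1, hc1, hQe, hwn, ?_, pendant_child hG hc1 hpend⟩
  rw [hQe, Set.ncard_insert_of_notMem hwn (Set.toFinite _)]
end Pend

section PathFacts
variable {V : Type*} [Fintype V] {G : SimpleGraph V} {v : V} {S : Set V}

lemma ne_of_distv {a b : V} (h : G.dist v a ≠ G.dist v b) : a ≠ b :=
  fun hab => h (by rw [hab])

lemma pair_bound (a b : V) (A : Set V) (h : A ⊆ ({a, b} : Set V)) : A.ncard ≤ 2 :=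
  le_trans (Set.ncard_le_ncard h (Set.toFinite _))
    (le_trans (Set.ncard_insert_le _ _) (by simp))

lemma sing_bound (a : V) (A : Set V) (h : A ⊆ ({a} : Set V)) : A.ncard ≤ 1 :=
  le_trans (Set.ncard_le_ncard h (Set.toFinite _)) (by simp)

set_option maxHeartbeats 2000000 in
lemma pathFacts (hG : G.IsTree) (hanc : AncClosed G v S) :
    ∀ n : ℕ, ∀ w ∈ S, Pendant G v S w → (descIn G v S w).ncard = n →
    (∀ A ⊆ descIn G v S w, IsDissocSet G A → A.ncard ≤ psi3 n) ∧
    (∃ M ⊆ descIn G v S w, IsDissocSet G M ∧ M.ncard = psi3 n ∧ (n % 3 = 0 → w ∉ M)) ∧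
    (n % 3 = 1 → ∀ A ⊆ descIn G v S w, IsDissocSet G A → w ∉ A → A.ncard + 1 ≤ psi3 n) ∧
    (n % 3 = 2 → ∀ A ⊆ descIn G v S w, IsDissocSet G A → ∀ z, childIn G v S w z →
      (w ∉ A ∨ z ∉ A) → A.ncard + 1 ≤ psi3 n) := by
  intro n
  induction n using Nat.strong_induction_on with
  | _ n IH =>
  intro w hw hpend hn
  have hwQ : w ∈ descIn G v S w := mem_descIn_self hw
  have hn0 : 1 ≤ n := by
    rw [← hn]; exact (Set.ncard_pos (Set.toFinite _)).2 ⟨w, hwQ⟩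
  rcases Nat.lt_or_ge n 4 with h4 | h4
  · interval_cases n
    · -- n = 1
      have hQ : descIn G v S w = {w} := desc_singleton hw hn
      refine ⟨?_, ⟨{w}, by rw [hQ], dissoc_singleton, by simp [psi3], fun h => by simp at h⟩,
        ?_, fun h => by simp at h⟩
      · intro A hA hdis
        have := Set.ncard_le_ncard (hQ ▸ hA) (Set.toFinite _)
        simpa [psi3] using this
      · intro _ A hA hdis hwA
        have hA0 : A = ∅ := by
          rw [Set.eq_empty_iff_forall_notMem]
          intro x hx
          have := (hQ ▸ hA) hx
          rw [Set.mem_singleton_iff] at this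
          exact hwA (this ▸ hx)
        simp [hA0, psi3]
    · -- n = 2
      obtain ⟨w1, hc1, hQe, hwn1, hcard1, hpend1⟩ := peel hG hanc hw hpend (by omega)
      have h1 : (descIn G v S w1).ncard = 1 := by omega
      have hQ1 : descIn G v S w1 = {w1} := desc_singleton hc1.1 h1
      have hQ : descIn G v S w = {w, w1} := by rw [hQe, hQ1]
      have hne01 : w ≠ w1 := ne_of_distv (G := G) (v := v) (by have := hc1.2.2; omega)
      refine ⟨?_, ⟨{w, w1}, by intro x hx; rwa [hQ], dissoc_pair, ?_, fun h => by simp at h⟩,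
        fun h => by simp at h, ?_⟩
      · intro A hA hdis
        have := pair_bound w w1 A (hQ ▸ hA)
        simpa [psi3] using this
      · rw [Set.ncard_pair hne01]; simp [psi3]
      · intro _ A hA hdis z hcz hyp
        have hze : z = w1 := hpend w hwQ z w1 hcz hc1
        rw [hze] at hyp
        have h2 : psi3 2 = 2 := by simp [psi3]
        rcases hyp with hwA | hzA
        · have : A ⊆ ({w1} : Set V) := by
            intro x hx
            have := (hQ ▸ hA) hx
            simp only [Set.mem_insert_iff, Set.mem_singleton_iff] at this ⊢
            rcases this with rfl | rfl
            · exact absurd hx hwA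
            · rfl
          have := sing_bound w1 A this; omega
        · have : A ⊆ ({w} : Set V) := by
            intro x hx
            have := (hQ ▸ hA) hx
            simp only [Set.mem_insert_iff, Set.mem_singleton_iff] at this ⊢
            rcases this with rfl | rfl
            · rfl
            · exact absurd hx hzA
          have := sing_bound w A this; omega
    · -- n = 3
      obtain ⟨w1, hc1, hQe, hwn1, hcard1, hpend1⟩ := peel hG hanc hw hpend (by omega)
      obtain ⟨w2, hc2, hQe1, hwn2, hcard2, hpend2⟩ := peel hG hanc hc1.1 hpend1 (by omega)
      have h1 : (descIn G v S w2).ncard = 1 := by omega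
      have hQ2 : descIn G v S w2 = {w2} := desc_singleton hc2.1 h1
      have hQ : descIn G v S w = {w, w1, w2} := by rw [hQe, hQe1, hQ2]
      have hd1 : G.dist v w1 = G.dist v w + 1 := hc1.2.2
      have hd2 : G.dist v w2 = G.dist v w + 2 := by have := hc2.2.2; omega
      have hne01 : w ≠ w1 := ne_of_distv (G := G) (v := v) (by omega)
      have hne02 : w ≠ w2 := ne_of_distv (G := G) (v := v) (by omega)
      have hne12 : w1 ≠ w2 := ne_of_distv (G := G) (v := v) (by omega)
      have hpsi : psi3 3 = 2 := by simp [psi3]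
      refine ⟨?_, ⟨{w1, w2}, ?_, dissoc_pair, by rw [Set.ncard_pair hne12]; omega, ?_⟩,
        fun h => by simp at h, fun h => by simp at h⟩
      · intro A hA hdis
        rw [hpsi]
        by_cases hw1A : w1 ∈ A
        · by_cases hwA : w ∈ A
          · have hw2A : w2 ∉ A := fun hw2A =>
              hne02 (hdis w1 hw1A w hwA w2 hw2A hc1.2.1.symm hc2.2.1)
            refine pair_bound w w1 A ?_
            intro x hx
            have := (hQ ▸ hA) hx
            simp only [Set.mem_insert_iff, Set.mem_singleton_iff] at this ⊢
            rcases this with rfl | rfl | rfl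
            · tauto
            · tauto
            · exact absurd hx hw2A
          · refine pair_bound w1 w2 A ?_
            intro x hx
            have := (hQ ▸ hA) hx
            simp only [Set.mem_insert_iff, Set.mem_singleton_iff] at this ⊢
            rcases this with rfl | rfl | rfl
            · exact absurd hx hwA
            · tauto
            · tauto
        · refine pair_bound w w2 A ?_
          intro x hx
          have := (hQ ▸ hA) hx
          simp only [Set.mem_insert_iff, Set.mem_singleton_iff] at this ⊢
          rcases this with rfl | rfl | rfl
          · tauto
          · exact absurd hx hw1A
          · tauto
      · rw [hQ]; intro x hx
        simp only [Set.mem_insert_iff, Set.mem_singleton_iff] at hx ⊢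
        tauto
      · intro _
        simp only [Set.mem_insert_iff, Set.mem_singleton_iff]
        push_neg
        exact ⟨hne01, hne02⟩
  · -- n ≥ 4 : inductive step
    obtain ⟨w1, hc1, hQe, hwn1, hcard1, hpend1⟩ := peel hG hanc hw hpend (by omega)
    obtain ⟨w2, hc2, hQe1, hwn2, hcard2, hpend2⟩ := peel hG hanc hc1.1 hpend1 (by omega)
    obtain ⟨w3, hc3, hQe2, hwn3, hcard3, hpend3⟩ := peel hG hanc hc2.1 hpend2 (by omega)
    set Q3 := descIn G v S w3 with hQ3def
    have hn3 : Q3.ncard = n - 3 := by omega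
    obtain ⟨P1, ⟨M3, hM3Q, hM3dis, hM3card, hM3avoid⟩, P3, P4⟩ :=
      IH (n - 3) (by omega) w3 hc3.1 hpend3 hn3
    have hd1 : G.dist v w1 = G.dist v w + 1 := hc1.2.2
    have hd2 : G.dist v w2 = G.dist v w + 2 := by have := hc2.2.2; omega
    have hd3 : G.dist v w3 = G.dist v w + 3 := by have := hc3.2.2; omega
    have hQ3dist : ∀ x ∈ Q3, G.dist v w + 3 ≤ G.dist v x := fun x hx => by
      have := mem_desc_dist hx; omega
    have hne01 : w ≠ w1 := ne_of_distv (G := G) (v := v) (by omega)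
    have hne02 : w ≠ w2 := ne_of_distv (G := G) (v := v) (by omega)
    have hne03 : w ≠ w3 := ne_of_distv (G := G) (v := v) (by omega)
    have hne12 : w1 ≠ w2 := ne_of_distv (G := G) (v := v) (by omega)
    have hne13 : w1 ≠ w3 := ne_of_distv (G := G) (v := v) (by omega)
    have hnadj_w : ∀ x ∈ Q3, ¬ G.Adj w x := fun x hx =>
      tree_nonadj hG v (by have := hQ3dist x hx; omega) (by have := hQ3dist x hx; omega)
    have hnadj_w1 : ∀ x ∈ Q3, ¬ G.Adj w1 x := fun x hx =>
      tree_nonadj hG v (by have := hQ3dist x hx; omega) (by have := hQ3dist x hx; omega)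
    have hadj_w2 : ∀ x ∈ Q3, G.Adj w2 x → x = w3 := fun x hx hadj =>
      desc_boundary hG hx hc2.1 hwn3 hadj.symm
    have hwnQ3 : w ∉ Q3 := fun h => by have := hQ3dist w h; omega
    have hw1nQ3 : w1 ∉ Q3 := fun h => by have := hQ3dist w1 h; omega
    have hw2nQ3 : w2 ∉ Q3 := hwn3
    have hQT : descIn G v S w = ({w, w1, w2} : Set V) ∪ Q3 := by
      rw [hQe, hQe1, hQe2]
      simp only [Set.insert_union, Set.singleton_union]
    have hdisjT : Disjoint ({w, w1, w2} : Set V) Q3 := by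
      rw [Set.disjoint_left]
      rintro x hx hx3
      simp only [Set.mem_insert_iff, Set.mem_singleton_iff] at hx
      have := hQ3dist x hx3
      rcases hx with rfl | rfl | rfl <;> omega
    have hpsi : psi3 n = psi3 (n - 3) + 2 := by simp only [psi3]; omega
    have hsplit : ∀ A : Set V, A ⊆ descIn G v S w →
        A.ncard = (A ∩ {w, w1, w2}).ncard + (A ∩ Q3).ncard := fun A hA =>
      ncard_split (hQT ▸ hA) hdisjT
    refine ⟨?_, ?_, ?_, ?_⟩
    · -- PF1
      intro A hA hdis
      have h3 := P1 (A ∩ Q3) Set.inter_subset_right (dissoc_subset hdis Set.inter_subset_left)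
      have hT2 : (A ∩ {w, w1, w2}).ncard ≤ 2 := by
        by_cases hw1A : w1 ∈ A
        · by_cases hwA : w ∈ A
          · have hw2A : w2 ∉ A := fun hw2A =>
              hne02 (hdis w1 hw1A w hwA w2 hw2A hc1.2.1.symm hc2.2.1)
            refine pair_bound w w1 _ ?_
            rintro x ⟨hxA, hxT⟩
            simp only [Set.mem_insert_iff, Set.mem_singleton_iff] at hxT ⊢
            rcases hxT with rfl | rfl | rfl
            · tauto
            · tauto
            · exact absurd hxA hw2A
          · refine pair_bound w1 w2 _ ?_
            rintro x ⟨hxA, hxT⟩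
            simp only [Set.mem_insert_iff, Set.mem_singleton_iff] at hxT ⊢
            rcases hxT with rfl | rfl | rfl
            · exact absurd hxA hwA
            · tauto
            · tauto
        · refine pair_bound w w2 _ ?_
          rintro x ⟨hxA, hxT⟩
          simp only [Set.mem_insert_iff, Set.mem_singleton_iff] at hxT ⊢
          rcases hxT with rfl | rfl | rfl
          · tauto
          · exact absurd hxA hw1A
          · tauto
      have := hsplit A hA
      omega
    · -- PF2
      by_cases hmod : n % 3 = 0
      · have hM3a : w3 ∉ M3 := hM3avoid (by omega)
        refine ⟨({w1, w2} : Set V) ∪ M3, ?_, ?_, ?_, fun _ => ?_⟩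
        · rw [hQT]
          refine Set.union_subset (fun x hx => Set.mem_union_left _ ?_)
            (hM3Q.trans Set.subset_union_right)
          simp only [Set.mem_insert_iff, Set.mem_singleton_iff] at hx ⊢
          tauto
        · refine dissoc_union dissoc_pair hM3dis ?_
          rintro a ha b hb
          simp only [Set.mem_insert_iff, Set.mem_singleton_iff] at ha
          rcases ha with rfl | rfl
          · exact hnadj_w1 b (hM3Q hb)
          · exact fun hadj => hM3a ((hadj_w2 b (hM3Q hb) hadj) ▸ hb)
        · rw [Set.ncard_union_eq ?_ (Set.toFinite _) (Set.toFinite _), Set.ncard_pair hne12,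
            hM3card, hpsi]
          · omega
          · rw [Set.disjoint_left]
            rintro x hx hxM
            simp only [Set.mem_insert_iff, Set.mem_singleton_iff] at hx
            rcases hx with rfl | rfl
            · exact hw1nQ3 (hM3Q hxM)
            · exact hw2nQ3 (hM3Q hxM)
        · simp only [Set.mem_union, Set.mem_insert_iff, Set.mem_singleton_iff]
          push_neg
          exact ⟨⟨hne01, hne02⟩, fun h => hwnQ3 (hM3Q h)⟩
      · refine ⟨({w, w1} : Set V) ∪ M3, ?_, ?_, ?_, fun h => absurd h hmod⟩
        · rw [hQT]
          refine Set.union_subset (fun x hx => Set.mem_union_left _ ?_)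
            (hM3Q.trans Set.subset_union_right)
          simp only [Set.mem_insert_iff, Set.mem_singleton_iff] at hx ⊢
          tauto
        · refine dissoc_union dissoc_pair hM3dis ?_
          rintro a ha b hb
          simp only [Set.mem_insert_iff, Set.mem_singleton_iff] at ha
          rcases ha with rfl | rfl
          · exact hnadj_w b (hM3Q hb)
          · exact hnadj_w1 b (hM3Q hb)
        · rw [Set.ncard_union_eq ?_ (Set.toFinite _) (Set.toFinite _), Set.ncard_pair hne01,
            hM3card, hpsi]
          · omega
          · rw [Set.disjoint_left]
            rintro x hx hxM
            simp only [Set.mem_insert_iff, Set.mem_singleton_iff] at hx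
            rcases hx with rfl | rfl
            · exact hwnQ3 (hM3Q hxM)
            · exact hw1nQ3 (hM3Q hxM)
    · -- PF3
      intro hmod A hA hdis hwA
      have h3mod : (n - 3) % 3 = 1 := by omega
      have hAs := hsplit A hA
      by_cases hw1A : w1 ∈ A
      · by_cases hw2A : w2 ∈ A
        · have hw3A : w3 ∉ A := fun h =>
            hne13 (hdis w2 hw2A w1 hw1A w3 h hc2.2.1.symm hc3.2.1)
          have h3 := P3 h3mod (A ∩ Q3) Set.inter_subset_right
            (dissoc_subset hdis Set.inter_subset_left) (fun h => hw3A h.1)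
          have hT2 : (A ∩ {w, w1, w2}).ncard ≤ 2 := by
            refine pair_bound w1 w2 _ ?_
            rintro x ⟨hxA, hxT⟩
            simp only [Set.mem_insert_iff, Set.mem_singleton_iff] at hxT ⊢
            rcases hxT with rfl | rfl | rfl
            · exact absurd hxA hwA
            · tauto
            · tauto
          omega
        · have h3 := P1 (A ∩ Q3) Set.inter_subset_right
            (dissoc_subset hdis Set.inter_subset_left)
          have hT1 : (A ∩ {w, w1, w2}).ncard ≤ 1 := by
            refine sing_bound w1 _ ?_
            rintro x ⟨hxA, hxT⟩
            simp only [Set.mem_insert_iff, Set.mem_singleton_iff] at hxT ⊢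
            rcases hxT with rfl | rfl | rfl
            · exact absurd hxA hwA
            · rfl
            · exact absurd hxA hw2A
          omega
      · have h3 := P1 (A ∩ Q3) Set.inter_subset_right
          (dissoc_subset hdis Set.inter_subset_left)
        have hT1 : (A ∩ {w, w1, w2}).ncard ≤ 1 := by
          refine sing_bound w2 _ ?_
          rintro x ⟨hxA, hxT⟩
          simp only [Set.mem_insert_iff, Set.mem_singleton_iff] at hxT ⊢
          rcases hxT with rfl | rfl | rfl
          · exact absurd hxA hwA
          · exact absurd hxA hw1A
          · rfl
        omega
    · -- PF4
      intro hmod A hA hdis z hcz hyp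
      have hze : z = w1 := hpend w hwQ z w1 hcz hc1
      rw [hze] at hyp
      have h3mod : (n - 3) % 3 = 2 := by omega
      have hn5 : 5 ≤ n := by omega
      obtain ⟨w4, hc4, -, -, hcard4, -⟩ := peel hG hanc hc3.1 hpend3
        (by have h := hn3; rw [hQ3def] at h; omega)
      have hd4 : G.dist v w4 = G.dist v w + 4 := by have := hc4.2.2; omega
      have hne24 : w2 ≠ w4 := ne_of_distv (G := G) (v := v) (by omega)
      have hAs := hsplit A hA
      by_cases hw2A : w2 ∈ A
      · have hQ3bound : (A ∩ Q3).ncard + 1 ≤ psi3 (n - 3) := by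
          by_cases hw3A : w3 ∈ A
          · have hw4A : w4 ∉ A := fun h =>
              hne24 (hdis w3 hw3A w2 hw2A w4 h hc3.2.1.symm hc4.2.1)
            exact P4 h3mod (A ∩ Q3) Set.inter_subset_right
              (dissoc_subset hdis Set.inter_subset_left) w4 hc4 (Or.inr fun h => hw4A h.1)
          · exact P4 h3mod (A ∩ Q3) Set.inter_subset_right
              (dissoc_subset hdis Set.inter_subset_left) w4 hc4 (Or.inl fun h => hw3A h.1)
        have hT2 : (A ∩ {w, w1, w2}).ncard ≤ 2 := by
          rcases hyp with hwA | hw1A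
          · refine pair_bound w1 w2 _ ?_
            rintro x ⟨hxA, hxT⟩
            simp only [Set.mem_insert_iff, Set.mem_singleton_iff] at hxT ⊢
            rcases hxT with rfl | rfl | rfl
            · exact absurd hxA hwA
            · tauto
            · tauto
          · refine pair_bound w w2 _ ?_
            rintro x ⟨hxA, hxT⟩
            simp only [Set.mem_insert_iff, Set.mem_singleton_iff] at hxT ⊢
            rcases hxT with rfl | rfl | rfl
            · tauto
            · exact absurd hxA hw1A
            · tauto
        omega
      · have h3 := P1 (A ∩ Q3) Set.inter_subset_right
          (dissoc_subset hdis Set.inter_subset_left)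
        have hT1 : (A ∩ {w, w1, w2}).ncard ≤ 1 := by
          rcases hyp with hwA | hw1A
          · refine sing_bound w1 _ ?_
            rintro x ⟨hxA, hxT⟩
            simp only [Set.mem_insert_iff, Set.mem_singleton_iff] at hxT ⊢
            rcases hxT with rfl | rfl | rfl
            · exact absurd hxA hwA
            · rfl
            · exact absurd hxA hw2A
          · refine sing_bound w _ ?_
            rintro x ⟨hxA, hxT⟩
            simp only [Set.mem_insert_iff, Set.mem_singleton_iff] at hxT ⊢
            rcases hxT with rfl | rfl | rfl
            · rfl
            · exact absurd hxA hw1A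
            · exact absurd hxA hw2A
        omega

end PathFacts

section Star
variable {V : Type*} [Fintype V] {G : SimpleGraph V} {v : V} {S : Set V}

lemma kids_pendant (hG : G.IsTree) (hanc : AncClosed G v S) {u c : V}
    (hdeep : ∀ x ∈ S, x ≠ v → branchIn G S x → G.dist v x ≤ G.dist v u)
    (hc : childIn G v S u c) : Pendant G v S c := by
  intro x hx c1 c2 h1 h2
  by_contra hne
  have hdx : G.dist v u + 1 ≤ G.dist v x := by
    have h5 := mem_desc_dist hx; have := hc.2.2; omega
  have hxv : x ≠ v := by
    intro h; rw [h, SimpleGraph.dist_self] at hdx; omega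
  exact absurd (hdeep x hx.1 hxv (branch_of_two_children hG hanc hx.1 hxv h1 h2 hne))
    (by omega)

lemma kids_disjoint (hG : G.IsTree) {u c c' : V} (hc : childIn G v S u c)
    (hc' : childIn G v S u c') (hne : c ≠ c') :
    Disjoint (descIn G v S c) (descIn G v S c') := by
  rw [Set.disjoint_left]
  intro x hx hx'
  exact hne (child_unique_of_desc hG hc hc' hx hx')

lemma kids_nonadj (hG : G.IsTree) {u c c' : V} (hc : childIn G v S u c)
    (hc' : childIn G v S u c') (hne : c ≠ c') :
    ∀ a ∈ descIn G v S c, ∀ b ∈ descIn G v S c', ¬ G.Adj a b := by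
  intro a ha b hb hadj
  have hbnc : b ∉ descIn G v S c := (Set.disjoint_right.1 (kids_disjoint hG hc hc' hne)) hb
  have hac : a = c := desc_boundary hG ha hb.1 hbnc hadj
  have hanc' : a ∉ descIn G v S c' := by
    rw [hac]; exact (Set.disjoint_left.1 (kids_disjoint hG hc hc' hne)) (mem_descIn_self hc.1)
  have hbc' : b = c' := desc_boundary hG hb ha.1 hanc' hadj.symm
  rw [hac, hbc'] at hadj
  exact tree_adj_dist_ne hG v hadj (by rw [hc.2.2, hc'.2.2])

/-- choice of a maximum dissociation set inside each child subtree -/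
lemma kids_family (hG : G.IsTree) (hanc : AncClosed G v S) {u : V}
    (hdeep : ∀ x ∈ S, x ≠ v → branchIn G S x → G.dist v x ≤ G.dist v u) :
    ∃ M : V → Set V, ∀ c, childIn G v S u c →
      M c ⊆ descIn G v S c ∧ IsDissocSet G (M c) ∧
      (M c).ncard = psi3 ((descIn G v S c).ncard) ∧
      ((descIn G v S c).ncard % 3 = 0 → c ∉ M c) := by
  have hex : ∀ c : V, ∃ Mc : Set V, childIn G v S u c →
      Mc ⊆ descIn G v S c ∧ IsDissocSet G Mc ∧
      Mc.ncard = psi3 ((descIn G v S c).ncard) ∧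
      ((descIn G v S c).ncard % 3 = 0 → c ∉ Mc) := by
    intro c
    by_cases hc : childIn G v S u c
    · obtain ⟨-, ⟨Mc, h1, h2, h3, h4⟩, -, -⟩ :=
        pathFacts hG hanc ((descIn G v S c).ncard) c hc.1 (kids_pendant hG hanc hdeep hc) rfl
      exact ⟨Mc, fun _ => ⟨h1, h2, h3, h4⟩⟩
    · exact ⟨∅, fun h => absurd h hc⟩
  choose M hM using hex
  exact ⟨M, hM⟩

end Star

section Star2
variable {V : Type*} [Fintype V] {G : SimpleGraph V} {v : V} {S : Set V}

lemma star_max (hG : G.IsTree) (hanc : AncClosed G v S) {u : V} (hu : u ∈ S) (hune : u ≠ v)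
    (hdeep : ∀ x ∈ S, x ≠ v → branchIn G S x → G.dist v x ≤ G.dist v u)
    (hcase : 1 ≤ (cIn G v S u 2).ncard ∨ 2 ≤ (cIn G v S u 1).ncard) :
    ∃ M, IsMaxDissocOn G (descIn G v S u) M ∧ u ∉ M := by
  classical
  obtain ⟨M, hM⟩ := kids_family hG hanc hdeep
  have hKf : ({c | childIn G v S u c} : Set V).Finite := Set.toFinite _
  set s : Finset V := hKf.toFinset with hsdef
  have hmems : ∀ c, c ∈ s ↔ childIn G v S u c := fun c => by
    rw [hsdef, Set.Finite.mem_toFinset]; rfl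
  set U : Set V := ⋃ c ∈ s, descIn G v S c with hUdef
  have hdec : descIn G v S u = {u} ∪ U := by
    ext x
    simp only [Set.mem_union, Set.mem_singleton_iff, hUdef, Set.mem_iUnion, exists_prop]
    constructor
    · intro hx
      by_cases hxu : x = u
      · exact Or.inl hxu
      · obtain ⟨c, hc, hxc⟩ := child_of_desc hG hanc hx hxu
        exact Or.inr ⟨c, (hmems c).2 hc, hxc⟩
    · rintro (rfl | ⟨c, hc, hxc⟩)
      · exact mem_descIn_self hu
      · exact descIn_child_subset hG ((hmems c).1 hc) hxc
  have hunotU : ∀ c ∈ s, u ∉ descIn G v S c := fun c hc =>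
    not_mem_descIn_child hG ((hmems c).1 hc) (le_refl _)
  have hudisj : Disjoint ({u} : Set V) U := by
    rw [Set.disjoint_left]
    intro a ha hmem
    rw [Set.mem_singleton_iff] at ha
    subst ha
    rw [hUdef] at hmem
    simp only [Set.mem_iUnion, exists_prop] at hmem
    obtain ⟨c, hc, hmem⟩ := hmem
    exact hunotU c hc hmem
  have hdisjf : ∀ c ∈ s, ∀ c' ∈ s, c ≠ c' → Disjoint (descIn G v S c) (descIn G v S c') :=
    fun c hc c' hc' hne => kids_disjoint hG ((hmems c).1 hc) ((hmems c').1 hc') hne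
  set Mtot : Set V := ⋃ c ∈ s, M c with hMtotdef
  have hMc : ∀ c ∈ s, M c ⊆ descIn G v S c ∧ IsDissocSet G (M c) ∧
      (M c).ncard = psi3 ((descIn G v S c).ncard) ∧
      ((descIn G v S c).ncard % 3 = 0 → c ∉ M c) := fun c hc => hM c ((hmems c).1 hc)
  have hMsub : Mtot ⊆ descIn G v S u := by
    rw [hMtotdef]
    intro x hx
    simp only [Set.mem_iUnion, exists_prop] at hx
    obtain ⟨c, hc, hx⟩ := hx
    exact descIn_child_subset hG ((hmems c).1 hc) ((hMc c hc).1 hx)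
  have hMnu : u ∉ Mtot := by
    rw [hMtotdef]
    simp only [Set.mem_iUnion, exists_prop]
    rintro ⟨c, hc, hmem⟩
    exact hunotU c hc ((hMc c hc).1 hmem)
  have hMdis : IsDissocSet G Mtot := by
    rw [hMtotdef]
    refine dissoc_biUnion s M (fun c hc => (hMc c hc).2.1) ?_
    intro c hc c' hc' hne a ha b hb
    exact kids_nonadj hG ((hmems c).1 hc) ((hmems c').1 hc') hne a ((hMc c hc).1 ha)
      b ((hMc c' hc').1 hb)
  have hMcard : Mtot.ncard = ∑ c ∈ s, psi3 ((descIn G v S c).ncard) := by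
    rw [hMtotdef, ncard_biUnion s M (fun c hc c' hc' hne =>
      (hdisjf c hc c' hc' hne).mono (hMc c hc).1 (hMc c' hc').1)]
    exact Finset.sum_congr rfl fun c hc => (hMc c hc).2.2.1
  refine ⟨Mtot, ⟨hMsub, hMdis, ?_⟩, hMnu⟩
  intro F hF hFdis
  have e1 : F.ncard = (F ∩ {u}).ncard + (F ∩ U).ncard := ncard_split (hdec ▸ hF) hudisj
  have e2 : (F ∩ U).ncard = ∑ c ∈ s, (F ∩ descIn G v S c).ncard := by
    rw [hUdef, ncard_eq_sum_of_subset s _ Set.inter_subset_right hdisjf]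
    refine Finset.sum_congr rfl fun c hc => ?_
    congr 1
    ext x
    simp only [Set.mem_inter_iff, hUdef, Set.mem_iUnion, exists_prop]
    constructor
    · rintro ⟨⟨hxF, -⟩, hxc⟩; exact ⟨hxF, hxc⟩
    · rintro ⟨hxF, hxc⟩; exact ⟨⟨hxF, ⟨c, hc, hxc⟩⟩, hxc⟩
  have hP1 : ∀ c ∈ s, (F ∩ descIn G v S c).ncard ≤ psi3 ((descIn G v S c).ncard) :=
    fun c hc =>
      (pathFacts hG hanc _ c ((hmems c).1 hc).1
        (kids_pendant hG hanc hdeep ((hmems c).1 hc)) rfl).1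
        (F ∩ descIn G v S c) Set.inter_subset_right (dissoc_subset hFdis Set.inter_subset_left)
  by_cases huF : u ∈ F
  · obtain ⟨cs, hcsK, hspec⟩ : ∃ cs, childIn G v S u cs ∧
        (F ∩ descIn G v S cs).ncard + 1 ≤ psi3 ((descIn G v S cs).ncard) := by
      rcases hcase with h2c | h1c
      · obtain ⟨c2, hc2⟩ := (Set.ncard_pos (Set.toFinite _)).1
          (by omega : 0 < (cIn G v S u 2).ncard)
        obtain ⟨hc2K, hc2mod⟩ := hc2
        have hc2pos : 0 < (descIn G v S c2).ncard :=
          (Set.ncard_pos (Set.toFinite _)).2 ⟨c2, mem_descIn_self hc2K.1⟩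
        obtain ⟨z2, hz2, -, -, -, -⟩ :=
          peel hG hanc hc2K.1 (kids_pendant hG hanc hdeep hc2K) (by omega)
        refine ⟨c2, hc2K, ?_⟩
        have hP4 := (pathFacts hG hanc _ c2 hc2K.1
          (kids_pendant hG hanc hdeep hc2K) rfl).2.2.2
        refine hP4 hc2mod (F ∩ _) Set.inter_subset_right
          (dissoc_subset hFdis Set.inter_subset_left) z2 hz2 ?_
        by_cases hc2F : c2 ∈ F
        · refine Or.inr fun hmem => ?_
          have huz2 := hFdis c2 hc2F u huF z2 hmem.1 hc2K.2.1.symm hz2.2.1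
          exact (ne_of_distv (G := G) (v := v)
            (by have := hz2.2.2; have := hc2K.2.2; omega)) huz2
        · exact Or.inl fun hmem => hc2F hmem.1
      · obtain ⟨cA, hcAmem, cB, hcBmem, hAB⟩ := (Set.one_lt_ncard (Set.toFinite _)).1
          (by omega : 1 < (cIn G v S u 1).ncard)
        by_cases hcAF : cA ∈ F
        · have hcBF : cB ∉ F := fun h =>
            hAB (hFdis u huF cA hcAF cB h hcAmem.1.2.1 hcBmem.1.2.1)
          refine ⟨cB, hcBmem.1, ?_⟩
          have hP3 := (pathFacts hG hanc _ cB hcBmem.1.1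
            (kids_pendant hG hanc hdeep hcBmem.1) rfl).2.2.1
          exact hP3 hcBmem.2 (F ∩ _) Set.inter_subset_right
            (dissoc_subset hFdis Set.inter_subset_left) fun h => hcBF h.1
        · refine ⟨cA, hcAmem.1, ?_⟩
          have hP3 := (pathFacts hG hanc _ cA hcAmem.1.1
            (kids_pendant hG hanc hdeep hcAmem.1) rfl).2.2.1
          exact hP3 hcAmem.2 (F ∩ _) Set.inter_subset_right
            (dissoc_subset hFdis Set.inter_subset_left) fun h => hcAF h.1
    have hcs_s : cs ∈ s := (hmems cs).2 hcsK
    have hFu : (F ∩ {u}).ncard ≤ 1 := sing_bound u _ Set.inter_subset_right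
    have e4 : (F ∩ descIn G v S cs).ncard + ∑ c ∈ s.erase cs, (F ∩ descIn G v S c).ncard =
        ∑ c ∈ s, (F ∩ descIn G v S c).ncard :=
      Finset.add_sum_erase s (fun c => (F ∩ descIn G v S c).ncard) hcs_s
    have e5 : psi3 ((descIn G v S cs).ncard) + ∑ c ∈ s.erase cs, psi3 ((descIn G v S c).ncard) =
        ∑ c ∈ s, psi3 ((descIn G v S c).ncard) :=
      Finset.add_sum_erase s (fun c => psi3 ((descIn G v S c).ncard)) hcs_s
    have e6 : (∑ c ∈ s.erase cs, (F ∩ descIn G v S c).ncard) ≤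
        ∑ c ∈ s.erase cs, psi3 ((descIn G v S c).ncard) :=
      Finset.sum_le_sum fun c hc => hP1 c (Finset.mem_of_mem_erase hc)
    omega
  · have hFu : (F ∩ {u}).ncard = 0 := by
      rw [Set.ncard_eq_zero (Set.toFinite _)]
      ext x
      simp only [Set.mem_inter_iff, Set.mem_singleton_iff, Set.mem_empty_iff_false, iff_false]
      rintro ⟨hxF, rfl⟩
      exact huF hxF
    have e6 : (∑ c ∈ s, (F ∩ descIn G v S c).ncard) ≤
        ∑ c ∈ s, psi3 ((descIn G v S c).ncard) := Finset.sum_le_sum hP1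
    omega

lemma unif_max (hG : G.IsTree) (hanc : AncClosed G v S) {u z : V} (hu : u ∈ S) (hune : u ≠ v)
    (hdeep : ∀ x ∈ S, x ≠ v → branchIn G S x → G.dist v x ≤ G.dist v u)
    (hz : childIn G v S u z)
    (h2 : (cIn G v S u 2).ncard = 0) (h1 : (cIn G v S u 1).ncard ≤ 1)
    (hz1 : (cIn G v S u 1).ncard = 1 → (descIn G v S z).ncard % 3 = 1) :
    ∃ M, IsMaxDissocOn G (⋃ w ∈ {w | childIn G v S u w ∧ w ≠ z}, descIn G v S w) M ∧
      ∀ c, childIn G v S u c → c ∉ M := by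
  classical
  obtain ⟨M, hM⟩ := kids_family hG hanc hdeep
  have hKf : ({c | childIn G v S u c ∧ c ≠ z} : Set V).Finite := Set.toFinite _
  set s : Finset V := hKf.toFinset with hsdef
  have hmems : ∀ c, c ∈ s ↔ (childIn G v S u c ∧ c ≠ z) := fun c => by
    rw [hsdef, Set.Finite.mem_toFinset]; rfl
  set D : Set V := ⋃ w ∈ {w | childIn G v S u w ∧ w ≠ z}, descIn G v S w with hDdef
  have hDeq : D = ⋃ c ∈ s, descIn G v S c := by
    rw [hDdef]
    ext x
    simp only [Set.mem_iUnion, exists_prop, Set.mem_setOf_eq, hmems]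
  have hmod0 : ∀ c ∈ s, (descIn G v S c).ncard % 3 = 0 := by
    intro c hc
    obtain ⟨hcK, hcz⟩ := (hmems c).1 hc
    have h3 : (descIn G v S c).ncard % 3 = 0 ∨ (descIn G v S c).ncard % 3 = 1 ∨
        (descIn G v S c).ncard % 3 = 2 := by omega
    rcases h3 with h | h | h
    · exact h
    · exfalso
      have hcmem : c ∈ cIn G v S u 1 := ⟨hcK, h⟩
      have hpos : 0 < (cIn G v S u 1).ncard := (Set.ncard_pos (Set.toFinite _)).2 ⟨c, hcmem⟩
      have hone : (cIn G v S u 1).ncard = 1 := by omega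
      have hzmem : z ∈ cIn G v S u 1 := ⟨hz, hz1 hone⟩
      obtain ⟨a, ha⟩ := Set.ncard_eq_one.1 hone
      rw [ha, Set.mem_singleton_iff] at hcmem hzmem
      exact hcz (hcmem.trans hzmem.symm)
    · exfalso
      have hcmem : c ∈ cIn G v S u 2 := ⟨hcK, h⟩
      have hpos : 0 < (cIn G v S u 2).ncard := (Set.ncard_pos (Set.toFinite _)).2 ⟨c, hcmem⟩
      omega
  have hdisjf : ∀ c ∈ s, ∀ c' ∈ s, c ≠ c' → Disjoint (descIn G v S c) (descIn G v S c') :=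
    fun c hc c' hc' hne =>
      kids_disjoint hG ((hmems c).1 hc).1 ((hmems c').1 hc').1 hne
  have hMc : ∀ c ∈ s, M c ⊆ descIn G v S c ∧ IsDissocSet G (M c) ∧
      (M c).ncard = psi3 ((descIn G v S c).ncard) ∧ c ∉ M c := fun c hc => by
    obtain ⟨a, b, cc, d⟩ := hM c ((hmems c).1 hc).1
    exact ⟨a, b, cc, d (hmod0 c hc)⟩
  set Mtot : Set V := ⋃ c ∈ s, M c with hMtotdef
  have hMsub : Mtot ⊆ D := by
    rw [hMtotdef, hDeq]
    intro x hx
    simp only [Set.mem_iUnion, exists_prop] at hx ⊢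
    obtain ⟨c, hc, hx⟩ := hx
    exact ⟨c, hc, (hMc c hc).1 hx⟩
  have hMdis : IsDissocSet G Mtot := by
    rw [hMtotdef]
    refine dissoc_biUnion s M (fun c hc => (hMc c hc).2.1) ?_
    intro c hc c' hc' hne a ha b hb
    exact kids_nonadj hG ((hmems c).1 hc).1 ((hmems c').1 hc').1 hne a ((hMc c hc).1 ha)
      b ((hMc c' hc').1 hb)
  have hMcard : Mtot.ncard = ∑ c ∈ s, psi3 ((descIn G v S c).ncard) := by
    rw [hMtotdef, ncard_biUnion s M (fun c hc c' hc' hne =>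
      (hdisjf c hc c' hc' hne).mono (hMc c hc).1 (hMc c' hc').1)]
    exact Finset.sum_congr rfl fun c hc => (hMc c hc).2.2.1
  refine ⟨Mtot, ⟨hMsub, hMdis, ?_⟩, ?_⟩
  · intro F hF hFdis
    rw [hDeq] at hF
    have e2 : F.ncard = ∑ c ∈ s, (F ∩ descIn G v S c).ncard :=
      ncard_eq_sum_of_subset s _ hF hdisjf
    have hP1 : ∀ c ∈ s, (F ∩ descIn G v S c).ncard ≤ psi3 ((descIn G v S c).ncard) :=
      fun c hc =>
        (pathFacts hG hanc _ c ((hmems c).1 hc).1.1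
          (kids_pendant hG hanc hdeep ((hmems c).1 hc).1) rfl).1
          (F ∩ descIn G v S c) Set.inter_subset_right (dissoc_subset hFdis Set.inter_subset_left)
    have := Finset.sum_le_sum hP1
    omega
  · intro c hcK hmem
    rw [hMtotdef] at hmem
    simp only [Set.mem_iUnion, exists_prop] at hmem
    obtain ⟨c', hc', hmem⟩ := hmem
    have hcc' : c = c' := child_unique_of_desc hG hcK ((hmems c').1 hc').1
      (mem_descIn_self hcK.1) ((hMc c' hc').1 hmem)
    subst hcc'
    exact (hMc c hc').2.2.2 hmem

end Star2

section Main
variable {V : Type*} [Fintype V] {G : SimpleGraph V} {v : V}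

lemma prune_step (hG : G.IsTree) {S S' : Set V} (hstep : PruneStep G v S S')
    (hanc : AncClosed G v S) (hvS : v ∈ S) :
    (v ∈ S' ∧ AncClosed G v S') ∧
    (∀ F', IsMaxDissocOn G S' F' → ∃ F, IsMaxDissocOn G S F ∧ (v ∈ F ↔ v ∈ F')) ∧
    (∀ F, IsMaxDissocOn G S F → ∃ F', IsMaxDissocOn G S' F' ∧ (v ∈ F' ↔ v ∈ F)) := by
  obtain ⟨u, hu, hune, hbr, hdeep, hcases⟩ := hstep
  rcases hcases with ⟨hcase, hS'⟩ | ⟨⟨h2, h1⟩, z, hz, hz1, hS'⟩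
  · subst hS'
    obtain ⟨M, hMmax, hMnu⟩ := star_max hG hanc hu hune hdeep hcase
    have hDS : descIn G v S u ⊆ S := descIn_subset
    have hvD : v ∉ descIn G v S u := v_not_mem_descIn hG hune
    have hcross : ∀ x ∈ M, ∀ y ∈ S \ descIn G v S u, ¬ G.Adj x y := by
      intro x hx y hy hadj
      have hxD : x ∈ descIn G v S u := hMmax.1 hx
      have hxu := desc_boundary hG hxD hy.1 hy.2 hadj
      exact hMnu (hxu ▸ hx)
    have hcorr := step_corr hDS hvS hvD hMmax hcross
    refine ⟨⟨⟨hvS, hvD⟩, ?_⟩, hcorr.1, hcorr.2⟩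
    intro x hx y hyd
    exact ⟨hanc x hx.1 y hyd, fun hyD => hx.2 (descIn_trans hG hyD hx.1 hyd)⟩
  · subst hS'
    obtain ⟨M, hMmax, hMnc⟩ := unif_max hG hanc hu hune hdeep hz h2 h1 hz1
    have hmemD : ∀ x, x ∈ (⋃ w ∈ {w | childIn G v S u w ∧ w ≠ z}, descIn G v S w) ↔
        ∃ c, (childIn G v S u c ∧ c ≠ z) ∧ x ∈ descIn G v S c := fun x => by
      simp only [Set.mem_iUnion, exists_prop, Set.mem_setOf_eq]
    have hDS : (⋃ w ∈ {w | childIn G v S u w ∧ w ≠ z}, descIn G v S w) ⊆ S := by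
      intro x hx
      obtain ⟨c, -, hxc⟩ := (hmemD x).1 hx
      exact hxc.1
    have hvD : v ∉ (⋃ w ∈ {w | childIn G v S u w ∧ w ≠ z}, descIn G v S w) := by
      intro hv
      obtain ⟨c, ⟨hcK, -⟩, hvc⟩ := (hmemD v).1 hv
      have hcv : c ≠ v := ne_of_distv (G := G) (v := v)
        (by rw [hcK.2.2, SimpleGraph.dist_self]; omega)
      exact v_not_mem_descIn hG hcv hvc
    have hcross : ∀ x ∈ M, ∀ y ∈ S \ (⋃ w ∈ {w | childIn G v S u w ∧ w ≠ z}, descIn G v S w),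
        ¬ G.Adj x y := by
      intro x hx y hy hadj
      obtain ⟨c, ⟨hcK, hcz⟩, hxc⟩ := (hmemD x).1 (hMmax.1 hx)
      have hync : y ∉ descIn G v S c := fun h => hy.2 ((hmemD y).2 ⟨c, ⟨hcK, hcz⟩, h⟩)
      have hxu := desc_boundary hG hxc hy.1 hync hadj
      exact hMnc c hcK (hxu ▸ hx)
    have hcorr := step_corr hDS hvS hvD hMmax hcross
    refine ⟨⟨⟨hvS, hvD⟩, ?_⟩, hcorr.1, hcorr.2⟩
    intro x hx y hyd
    refine ⟨hanc x hx.1 y hyd, fun hyD => ?_⟩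
    obtain ⟨c, hcK, hyc⟩ := (hmemD y).1 hyD
    exact hx.2 ((hmemD x).2 ⟨c, hcK, descIn_trans hG hyc hx.1 hyd⟩)

lemma chain_corr (hG : G.IsTree) {Sbar : Set V}
    (h : Relation.ReflTransGen (PruneStep G v) Set.univ Sbar) :
    (v ∈ Sbar ∧ AncClosed G v Sbar) ∧
    (∀ F', IsMaxDissocOn G Sbar F' → ∃ F, IsMaxDissocOn G Set.univ F ∧ (v ∈ F ↔ v ∈ F')) ∧
    (∀ F, IsMaxDissocOn G Set.univ F → ∃ F', IsMaxDissocOn G Sbar F' ∧ (v ∈ F' ↔ v ∈ F)) := by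
  induction h with
  | refl =>
    exact ⟨⟨Set.mem_univ v, fun x _ y _ => Set.mem_univ y⟩,
      fun F' h => ⟨F', h, Iff.rfl⟩, fun F h => ⟨F, h, Iff.rfl⟩⟩
  | @tail b c hab hbc ih =>
    obtain ⟨⟨hvb, hancb⟩, ihf, ihb⟩ := ih
    obtain ⟨⟨hvc, hancc⟩, stf, stb⟩ := prune_step hG hbc hancb hvb
    refine ⟨⟨hvc, hancc⟩, ?_, ?_⟩
    · intro F' hF'
      obtain ⟨F1, h1, e1⟩ := stf F' hF'
      obtain ⟨F, h2, e2⟩ := ihf F1 h1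
      exact ⟨F, h2, e2.trans e1⟩
    · intro F hF
      obtain ⟨F1, h1, e1⟩ := ihb F hF
      obtain ⟨F', h2, e2⟩ := stb F1 h1
      exact ⟨F', h2, e2.trans e1⟩

lemma maxOn_univ_iff {F : Set V} : IsMaxDissocOn G Set.univ F ↔ IsMaxDissocSet G F :=
  ⟨fun ⟨_, d, m⟩ => ⟨d, fun F' hd => m F' (Set.subset_univ _) hd⟩,
   fun ⟨d, m⟩ => ⟨Set.subset_univ _, d, fun F' _ hd => m F' hd⟩⟩

end Main


theorem stmt14 {V : Type*} [Fintype V] (G : SimpleGraph V) (hG : G.IsTree) (v : V)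
    (Sbar : Set V) (hbar : IsPruning G v Sbar) :
    (∀ Fbar : Set V, IsMaxDissocOn G Sbar Fbar →
      ∃ F : Set V, IsMaxDissocSet G F ∧ (v ∈ F ↔ v ∈ Fbar)) ∧
    (∀ F : Set V, IsMaxDissocSet G F →
      ∃ Fbar : Set V, IsMaxDissocOn G Sbar Fbar ∧ (v ∈ Fbar ↔ v ∈ F)) := by
  obtain ⟨hchain, -⟩ := hbar
  obtain ⟨-, hf, hb⟩ := chain_corr hG hchain
  constructor
  · intro Fbar hFbar
    obtain ⟨F, hF, he⟩ := hf Fbar hFbar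
    exact ⟨F, maxOn_univ_iff.1 hF, he⟩
  · intro F hF
    obtain ⟨Fbar, hFbar, he⟩ := hb F (maxOn_univ_iff.2 hF)
    exact ⟨Fbar, hFbar, he⟩
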